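/- arXiv:2312.02024 — 2 statements merged into one kernel-verified Lean document; each statement's English description precedes it below -/
import Mathlib

section
/- Let A, B, C be an affinely independent triple in the Euclidean plane with side lengths a = dist B C, b = dist C A, c = dist A B, semiperimeter s = (a+b+c)/2, and incenter I = (a·A + b·B + c·C)/(2s). Let N_a = ((s−a)·A + (s−b)·B + (s−c)·C)/s be the Nagel point. Let H_B and H_C be the orthocenters of triangles CIA and AIB respectively. Then the vector N_a − A is orthogonal to the vector H_C − H_B. -/
open EuclideanGeometry
open scoped InnerProductSpace

/-!
Put the vertex `A` at the origin and write `u = B - A`, `v = C - A`, `p = I - A`, `n = N_a - A`.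
From the barycentric formulas, `c • n = (c - b) • u + (2s - 2c) • p`. The orthocenter `h` of the
triangle `0, p, u` satisfies `⟪h, u⟫ = ⟪h, p⟫ = ⟪p, u⟫`, so `c ⟪n, h⟫ = a ⟪p, u⟫`, and
`2s ⟪p, u⟫ = c (b c + ⟪u, v⟫)`. Hence `⟪n, H_C - A⟫ = a (b c + ⟪u, v⟫) / (2s)`, an expression
symmetric in `B` and `C`, so it also equals `⟪n, H_B - A⟫`.
-/

/-- The orthocenter of the triangle with vertices `A`, `B`, `C`. -/
noncomputable def orthocenter3 (A B C : EuclideanSpace ℝ (Fin 2))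
    (h : AffineIndependent ℝ ![A, B, C]) : EuclideanSpace ℝ (Fin 2) :=
  Affine.Triangle.orthocenter ⟨![A, B, C], h⟩

/-- The circumcenter of the triangle with vertices `A`, `B`, `C`. -/
noncomputable def circumcenter3 (A B C : EuclideanSpace ℝ (Fin 2))
    (h : AffineIndependent ℝ ![A, B, C]) : EuclideanSpace ℝ (Fin 2) :=
  Affine.Simplex.circumcenter ⟨![A, B, C], h⟩

/-- The circumradius of the triangle with vertices `A`, `B`, `C`. -/
noncomputable def circumradius3 (A B C : EuclideanSpace ℝ (Fin 2))
    (h : AffineIndependent ℝ ![A, B, C]) : ℝ :=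
  Affine.Simplex.circumradius ⟨![A, B, C], h⟩

theorem Affine.Triangle.inner_orthocenter_vsub_vsub {V P : Type*} [NormedAddCommGroup V]
    [InnerProductSpace ℝ V] [MetricSpace P] [NormedAddTorsor V P] (t : Triangle ℝ P)
    {i j k : Fin 3} (hij : i ≠ j) (hik : i ≠ k) :
    ⟪t.orthocenter -ᵥ t.points i, t.points j -ᵥ t.points k⟫_ℝ = 0 := by
  rw [real_inner_comm]
  refine (t.vectorSpan_isOrtho_altitude_direction i).inner_eq ?_ ?_
  · exact vsub_mem_vectorSpan ℝ (Set.mem_image_of_mem _ hij.symm)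
      (Set.mem_image_of_mem _ hik.symm)
  · exact AffineSubspace.vsub_mem_direction t.orthocenter_mem_altitude (t.mem_altitude i)

theorem inner_orthocenter3_sub_sub (A B C : EuclideanSpace ℝ (Fin 2))
    (h : AffineIndependent ℝ ![A, B, C]) {i j k : Fin 3} (hij : i ≠ j) (hik : i ≠ k) :
    ⟪orthocenter3 A B C h - ![A, B, C] i, ![A, B, C] j - ![A, B, C] k⟫_ℝ = 0 :=
  Affine.Triangle.inner_orthocenter_vsub_vsub ⟨![A, B, C], h⟩ hij hik

section

variable {V : Type*} [NormedAddCommGroup V] [InnerProductSpace ℝ V]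

theorem two_mul_smul_sub_eq_of_eq_incenter {A B C I : V} {a b c s : ℝ}
    (hs : s = (a + b + c) / 2) (hs0 : s ≠ 0)
    (hI : I = (2 * s)⁻¹ • (a • A + b • B + c • C)) :
    (2 * s) • (I - A) = b • (B - A) + c • (C - A) := by
  rw [hI, smul_sub, smul_inv_smul₀ (mul_ne_zero two_ne_zero hs0)]
  subst hs
  module

theorem smul_sub_eq_of_eq_nagel {A B C N : V} {a b c s : ℝ}
    (hs : s = (a + b + c) / 2) (hs0 : s ≠ 0)
    (hN : N = s⁻¹ • ((s - a) • A + (s - b) • B + (s - c) • C)) :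
    s • (N - A) = (s - b) • (B - A) + (s - c) • (C - A) := by
  rw [hN, smul_sub, smul_inv_smul₀ hs0]
  subst hs
  module

theorem inner_nagel_orthocenter_eq {u v p n h : V} {b c s : ℝ} (hs0 : s ≠ 0) (hc0 : c ≠ 0)
    (hu : ‖u‖ = c) (hp : (2 * s) • p = b • u + c • v) (hn : s • n = (s - b) • u + (s - c) • v)
    (hhp : ⟪h, p - u⟫_ℝ = 0) (hhu : ⟪h - p, u⟫_ℝ = 0) :
    ⟪n, h⟫_ℝ = (2 * s - b - c) * (b * c + ⟪u, v⟫_ℝ) / (2 * s) := by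
  have hhu' : ⟪u, h⟫_ℝ = ⟪p, u⟫_ℝ := by
    rwa [inner_sub_left, sub_eq_zero, real_inner_comm] at hhu
  have hhp' : ⟪p, h⟫_ℝ = ⟪p, u⟫_ℝ := by
    rwa [inner_sub_right, sub_eq_zero, real_inner_comm u, hhu', real_inner_comm] at hhp
  have hcn : c • n = (c - b) • u + (2 * s - 2 * c) • p := by
    apply smul_right_injective V hs0
    linear_combination (norm := module) c • hn - (s - c) • hp
  have hpu : (2 * s) * ⟪p, u⟫_ℝ = c * (b * c + ⟪u, v⟫_ℝ) := by
    rw [← real_inner_smul_left, hp, inner_add_left, real_inner_smul_left, real_inner_smul_left,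
      real_inner_self_eq_norm_sq, hu, real_inner_comm]
    ring
  have hnh : c * ⟪n, h⟫_ℝ = (2 * s - b - c) * ⟪p, u⟫_ℝ := by
    rw [← real_inner_smul_left, hcn, inner_add_left, real_inner_smul_left, real_inner_smul_left,
      hhu', hhp']
    ring
  field_simp
  apply mul_left_cancel₀ hc0
  linear_combination (2 * s) * hnh + (2 * s - b - c) * hpu

end

theorem nagel_line_perp_general (A B C I Na HB HC : EuclideanSpace ℝ (Fin 2))
    (a b c s : ℝ)
    (ha : a = dist B C) (hb : b = dist C A) (hc : c = dist A B)
    (hs : s = (a + b + c) / 2)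
    (hI : I = (2 * s)⁻¹ • (a • A + b • B + c • C))
    (hNa : Na = s⁻¹ • ((s - a) • A + (s - b) • B + (s - c) • C))
    (hCIA : AffineIndependent ℝ ![C, I, A])
    (hAIB : AffineIndependent ℝ ![A, I, B])
    (hHB : HB = orthocenter3 C I A hCIA)
    (hHC : HC = orthocenter3 A I B hAIB) :
    ⟪Na - A, HC - HB⟫_ℝ = 0 := by
  have hb0 : 0 < b := hb ▸ dist_pos.2 (hCIA.injective.ne (by decide : (0 : Fin 3) ≠ 2))
  have hc0 : 0 < c := hc ▸ dist_pos.2 (hAIB.injective.ne (by decide : (0 : Fin 3) ≠ 2))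
  have hs0 : s ≠ 0 := by
    have : 0 ≤ a := ha ▸ dist_nonneg
    rw [hs]
    positivity
  have hp := two_mul_smul_sub_eq_of_eq_incenter hs hs0 hI
  have hn := smul_sub_eq_of_eq_nagel hs hs0 hNa
  have hC₁ : ⟪HC - A, I - B⟫_ℝ = 0 :=
    hHC ▸ inner_orthocenter3_sub_sub A I B hAIB (i := 0) (j := 1) (k := 2) (by decide) (by decide)
  have hC₂ : ⟪HC - I, B - A⟫_ℝ = 0 :=
    hHC ▸ inner_orthocenter3_sub_sub A I B hAIB (i := 1) (j := 2) (k := 0) (by decide) (by decide)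
  have hB₁ : ⟪HB - A, I - C⟫_ℝ = 0 :=
    hHB ▸ inner_orthocenter3_sub_sub C I A hCIA (i := 2) (j := 1) (k := 0) (by decide) (by decide)
  have hB₂ : ⟪HB - I, C - A⟫_ℝ = 0 :=
    hHB ▸ inner_orthocenter3_sub_sub C I A hCIA (i := 1) (j := 0) (k := 2) (by decide) (by decide)
  have hC := inner_nagel_orthocenter_eq hs0 hc0.ne' (by rw [hc, dist_comm, dist_eq_norm]) hp hn
    (by rwa [sub_sub_sub_cancel_right]) (by rwa [sub_sub_sub_cancel_right])
  have hB := inner_nagel_orthocenter_eq hs0 hb0.ne' (by rw [hb, dist_eq_norm])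
    (by rw [hp, add_comm]) (by rw [hn, add_comm])
    (by rwa [sub_sub_sub_cancel_right]) (by rwa [sub_sub_sub_cancel_right])
  rw [← sub_sub_sub_cancel_right HC HB A, inner_sub_right, hC, hB, real_inner_comm (C - A)]
  ring

/-- `A N_a` is perpendicular to `H_B H_C`. -/
theorem nagel_line_perp (A B C I Na HB HC : EuclideanSpace ℝ (Fin 2))
    (hABC : AffineIndependent ℝ ![A, B, C])
    (a b c s : ℝ)
    (ha : a = dist B C) (hb : b = dist C A) (hc : c = dist A B)
    (hs : s = (a + b + c) / 2)
    (hI : I = (2 * s)⁻¹ • (a • A + b • B + c • C))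
    (hNa : Na = s⁻¹ • ((s - a) • A + (s - b) • B + (s - c) • C))
    (hCIA : AffineIndependent ℝ ![C, I, A])
    (hAIB : AffineIndependent ℝ ![A, I, B])
    (hHB : HB = orthocenter3 C I A hCIA)
    (hHC : HC = orthocenter3 A I B hAIB) :
    ⟪Na - A, HC - HB⟫_ℝ = 0 :=
  nagel_line_perp_general A B C I Na HB HC a b c s ha hb hc hs hI hNa hCIA hAIB hHB hHC
end

section
/- Let A, B, C be an affinely independent triple in the Euclidean plane with incenter I = (a·A + b·B + c·C)/(2s) (where a = dist B C, b = dist C A, c = dist A B, s = (a+b+c)/2) and orthocenter H. Let H_A, H_B, H_C be the orthocenters of triangles BIC, CIA, AIB, let O_a, O_b, O_c be the circumcenters of triangles H_A B C, H_B C A, H_C A B respectively (each triple assumed affinely independent), and assume O_a, O_b, O_c are affinely independent. Then H lies on the circumcircle of the Fuhrmann triangle O_a O_b O_c, i.e., the distance from H to the circumcenter of triangle O_a O_b O_c equals its circumradius. -/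
open EuclideanGeometry
open scoped InnerProductSpace

/-!
Put `O` for the circumcenter of `ABC`, so that `H = A + B + C - 2 • O`. By the
incenter–excenter lemma the circumcenter of `BIC` is the midpoint `M` of the arc `BC`, and since
`H_A = B + I + C - 2 • M`, the circle through `H_A`, `B`, `C` has center `O_a = B + C - M`. Now
`H - O_a = (A - O) + (M - O)` is orthogonal to the chord `AM` of the circumcircle, while
`N - O_a` is parallel to `AM` for the Nagel point `N`. Hence `O_a`, and likewise `O_b`, `O_c`,
lie on the circle with diameter `HN`, which is therefore the Fuhrmann circle.
-/

theorem inner_vsub_vsub_eq_zero_iff_mem_sphere_ofDiameter {V P : Type*}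
    [NormedAddCommGroup V] [InnerProductSpace ℝ V] [MetricSpace P] [NormedAddTorsor V P]
    {p₁ p₂ p : P} :
    ⟪p₁ -ᵥ p, p₂ -ᵥ p⟫_ℝ = 0 ↔ p ∈ Sphere.ofDiameter p₁ p₂ :=
  (InnerProductGeometry.inner_eq_zero_iff_angle_eq_pi_div_two _ _).trans
    Sphere.angle_eq_pi_div_two_iff_mem_sphere_ofDiameter

section TriangleCenters

variable {V : Type*} [NormedAddCommGroup V] [InnerProductSpace ℝ V]

theorem dist_smul_add_smul_add_smul_sq {α β γ : ℝ} (h : α + β + γ = 1) (A B C Q : V) :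
    dist (α • A + β • B + γ • C) Q ^ 2 =
      α * dist A Q ^ 2 + β * dist B Q ^ 2 + γ * dist C Q ^ 2 -
        (β * γ * dist B C ^ 2 + γ * α * dist C A ^ 2 + α * β * dist A B ^ 2) := by
  have hQ : α • A + β • B + γ • C - Q = α • (A - Q) + β • (B - Q) + γ • (C - Q) := by
    linear_combination (norm := module) h • Q
  rw [dist_eq_norm, hQ, dist_eq_norm A, dist_eq_norm B, dist_eq_norm C,
    dist_eq_norm B, dist_eq_norm C, dist_eq_norm A,
    show B - C = (B - Q) - (C - Q) by abel, show C - A = (C - Q) - (A - Q) by abel,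
    show A - B = (A - Q) - (B - Q) by abel]
  generalize A - Q = x, B - Q = y, C - Q = z
  simp only [← real_inner_self_eq_norm_sq, inner_add_left, inner_add_right, real_inner_smul_left,
    real_inner_smul_right, inner_sub_left, inner_sub_right]
  rw [real_inner_comm x y, real_inner_comm x z, real_inner_comm y z]
  linear_combination (α * ⟪x, x⟫_ℝ + β * ⟪y, y⟫_ℝ + γ * ⟪z, z⟫_ℝ) * h

theorem dist_lt_dist_add_dist_of_affineIndependent {A B C : V}
    (h : AffineIndependent ℝ ![A, B, C]) : dist B C < dist C A + dist A B := by
  rw [add_comm, dist_comm C, dist_comm A, dist_lt_dist_add_dist_iff]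
  intro hBAC
  refine affineIndependent_iff_not_collinear_set.1 h ?_
  simpa only [Set.insert_comm] using hBAC.collinear

theorem affineIndependent_rotate {A B C : V} (h : AffineIndependent ℝ ![A, B, C]) :
    AffineIndependent ℝ ![B, C, A] := by
  rw [affineIndependent_iff_not_collinear_set] at h ⊢
  rwa [Set.insert_comm, Set.pair_comm] at h

variable (A B C : V) (a b c : ℝ)

/-- The second intersection of the bisector `AI` with the circumcircle of `ABC` (the midpoint of
the arc `BC`), in barycentric coordinates when `a`, `b`, `c` are the side lengths. -/
noncomputable def arcMidpoint : V :=
  ((a + b + c) * (b + c - a))⁻¹ • ((-a ^ 2) • A + (b * (b + c)) • B + (c * (b + c)) • C)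

noncomputable def fuhrmannVertex : V := B + C - arcMidpoint A B C a b c

noncomputable def nagelPoint : V :=
  (a + b + c)⁻¹ • ((b + c - a) • A + (c + a - b) • B + (a + b - c) • C)

theorem nagelPoint_rotate : nagelPoint B C A b c a = nagelPoint A B C a b c := by
  unfold nagelPoint
  rw [show b + c + a = a + b + c by ring]
  module

variable {A B C a b c}

theorem dist_arcMidpoint_sq (ha : dist B C = a) (hb : dist C A = b) (hc : dist A B = c)
    (hT : a + b + c ≠ 0) (hU : b + c - a ≠ 0) (Q : V) :
    dist (arcMidpoint A B C a b c) Q ^ 2 * ((a + b + c) * (b + c - a)) =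
      -a ^ 2 * dist A Q ^ 2 + b * (b + c) * dist B Q ^ 2 + c * (b + c) * dist C Q ^ 2 := by
  have hM : arcMidpoint A B C a b c = (-a ^ 2 / ((a + b + c) * (b + c - a))) • A +
      (b * (b + c) / ((a + b + c) * (b + c - a))) • B +
      (c * (b + c) / ((a + b + c) * (b + c - a))) • C := by
    unfold arcMidpoint; module
  rw [hM, dist_smul_add_smul_add_smul_sq (by field_simp; ring), ha, hb, hc]
  field_simp
  ring

theorem dist_sq_of_eq_incenter (ha : dist B C = a) (hb : dist C A = b) (hc : dist A B = c)
    (hT : a + b + c ≠ 0) {I : V} (hI : I = (a + b + c)⁻¹ • (a • A + b • B + c • C)) (Q : V) :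
    dist I Q ^ 2 * (a + b + c) =
      a * dist A Q ^ 2 + b * dist B Q ^ 2 + c * dist C Q ^ 2 - a * b * c := by
  have hI' : I = (a / (a + b + c)) • A + (b / (a + b + c)) • B + (c / (a + b + c)) • C := by
    rw [hI]; module
  rw [hI', dist_smul_add_smul_add_smul_sq (by field_simp), ha, hb, hc]
  field_simp

theorem dist_arcMidpoint_eq_of_eq_incenter (ha : dist B C = a) (hb : dist C A = b)
    (hc : dist A B = c) (hT : a + b + c ≠ 0) (hU : b + c - a ≠ 0) {I : V}
    (hI : I = (a + b + c)⁻¹ • (a • A + b • B + c • C)) :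
    dist B (arcMidpoint A B C a b c) = dist C (arcMidpoint A B C a b c) ∧
      dist I (arcMidpoint A B C a b c) = dist C (arcMidpoint A B C a b c) := by
  have hD : (a + b + c) * (b + c - a) ≠ 0 := mul_ne_zero hT hU
  have hMQ := dist_arcMidpoint_sq ha hb hc hT hU
  have hIQ := dist_sq_of_eq_incenter ha hb hc hT hI
  have hMB := hMQ B
  have hMC := hMQ C
  have hMI := hMQ I
  rw [dist_comm A I, dist_comm B I, dist_comm C I] at hMI
  have hIA := hIQ A
  have hIB := hIQ B
  have hIC := hIQ C
  simp only [dist_self, dist_comm B A, dist_comm C B, dist_comm A C, ha, hb, hc]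
    at hMB hMC hIA hIB hIC
  rw [dist_comm B, dist_comm C, dist_comm I]
  constructor
  all_goals
    refine (sq_eq_sq₀ dist_nonneg dist_nonneg).1 (mul_right_cancel₀ hD ?_)
  · linear_combination hMB - hMC
  · refine mul_right_cancel₀ hT ?_
    linear_combination (a + b + c) * hMI - a ^ 2 * hIA + b * (b + c) * hIB + c * (b + c) * hIC
      - (a + b + c) * hMC

theorem smul_nagelPoint_sub_fuhrmannVertex (hT : a + b + c ≠ 0) (hU : b + c - a ≠ 0) :
    (b + c) • (nagelPoint A B C a b c - fuhrmannVertex A B C a b c) =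
      (b + c - 2 * a) • (A - arcMidpoint A B C a b c) := by
  unfold nagelPoint fuhrmannVertex arcMidpoint
  match_scalars <;> field_simp <;> ring

theorem fuhrmannVertex_mem_sphere_ofDiameter (ha : dist B C = a) (hb : dist C A = b)
    (hc : dist A B = c) (hbc : a < b + c) {O : V} (hAO : dist A O = dist C O)
    (hBO : dist B O = dist C O) :
    fuhrmannVertex A B C a b c ∈
      Sphere.ofDiameter (A + B + C - (2 : ℝ) • O) (nagelPoint A B C a b c) := by
  have ha0 : 0 ≤ a := ha ▸ dist_nonneg
  have hT : a + b + c ≠ 0 := (by linarith : 0 < a + b + c).ne'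
  have hU : b + c - a ≠ 0 := (sub_pos.2 hbc).ne'
  have hbc0 : b + c ≠ 0 := (by linarith : 0 < b + c).ne'
  set M := arcMidpoint A B C a b c
  have hMO : dist M O = dist A O := by
    refine (sq_eq_sq₀ dist_nonneg dist_nonneg).1 (mul_right_cancel₀ (mul_ne_zero hT hU) ?_)
    rw [dist_arcMidpoint_sq ha hb hc hT hU, hAO, hBO]
    ring
  have hperp : ⟪(A - O) + (M - O), (A - O) - (M - O)⟫_ℝ = 0 :=
    real_inner_add_sub_eq_zero_iff _ _ |>.2 (by rw [← dist_eq_norm, ← dist_eq_norm, hMO])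
  have hHX : A + B + C - (2 : ℝ) • O - fuhrmannVertex A B C a b c = (A - O) + (M - O) := by
    unfold fuhrmannVertex; module
  rw [← inner_vsub_vsub_eq_zero_iff_mem_sphere_ofDiameter, vsub_eq_sub, vsub_eq_sub, hHX]
  refine (mul_eq_zero.1 ?_).resolve_left hbc0
  rw [← real_inner_smul_right, smul_nagelPoint_sub_fuhrmannVertex hT hU,
    show A - M = (A - O) - (M - O) by abel, real_inner_smul_right, hperp, mul_zero]

end TriangleCenters

section Triangle

variable {X Y Z : EuclideanSpace ℝ (Fin 2)}

theorem circumsphere_eq_of_mem_sphere (h : AffineIndependent ℝ ![X, Y, Z])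
    {S : Sphere (EuclideanSpace ℝ (Fin 2))} (hX : X ∈ S) (hY : Y ∈ S) (hZ : Z ∈ S) :
    (⟨![X, Y, Z], h⟩ : Affine.Triangle ℝ (EuclideanSpace ℝ (Fin 2))).circumsphere = S := by
  refine ((Affine.Simplex.circumsphere_unique_dist_eq _).2 S ⟨?_, ?_⟩).symm
  · rw [h.affineSpan_eq_top_iff_card_eq_finrank_add_one.2 (by simp)]
    trivial
  · rintro _ ⟨i, rfl⟩
    fin_cases i <;> assumption

theorem circumcenter3_eq_of_mem_sphere (h : AffineIndependent ℝ ![X, Y, Z])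
    {S : Sphere (EuclideanSpace ℝ (Fin 2))} (hX : X ∈ S) (hY : Y ∈ S) (hZ : Z ∈ S) :
    circumcenter3 X Y Z h = S.center := by
  rw [circumcenter3, ← Affine.Simplex.circumsphere_center, circumsphere_eq_of_mem_sphere h hX hY hZ]

theorem circumradius3_eq_of_mem_sphere (h : AffineIndependent ℝ ![X, Y, Z])
    {S : Sphere (EuclideanSpace ℝ (Fin 2))} (hX : X ∈ S) (hY : Y ∈ S) (hZ : Z ∈ S) :
    circumradius3 X Y Z h = S.radius := by
  rw [circumradius3, ← Affine.Simplex.circumsphere_radius, circumsphere_eq_of_mem_sphere h hX hY hZ]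

theorem dist_circumcenter3_eq_circumradius3 (h : AffineIndependent ℝ ![X, Y, Z]) :
    dist X (circumcenter3 X Y Z h) = circumradius3 X Y Z h ∧
      dist Y (circumcenter3 X Y Z h) = circumradius3 X Y Z h ∧
      dist Z (circumcenter3 X Y Z h) = circumradius3 X Y Z h :=
  let t : Affine.Triangle ℝ (EuclideanSpace ℝ (Fin 2)) := ⟨![X, Y, Z], h⟩
  ⟨t.dist_circumcenter_eq_circumradius 0, t.dist_circumcenter_eq_circumradius 1,
    t.dist_circumcenter_eq_circumradius 2⟩

theorem orthocenter3_eq (h : AffineIndependent ℝ ![X, Y, Z]) :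
    orthocenter3 X Y Z h = X + Y + Z - (2 : ℝ) • circumcenter3 X Y Z h := by
  have hsylvester := Affine.Triangle.orthocenter_vsub_circumcenter_eq_sum_vsub ⟨![X, Y, Z], h⟩
  simp only [vsub_eq_sub, Fin.sum_univ_succ, Fin.sum_univ_zero, Matrix.cons_val_zero,
    Matrix.cons_val_succ] at hsylvester
  unfold orthocenter3 circumcenter3
  linear_combination (norm := module) hsylvester

theorem orthocenter3_rotate (h : AffineIndependent ℝ ![X, Y, Z]) :
    orthocenter3 Y Z X (affineIndependent_rotate h) = orthocenter3 X Y Z h := by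
  obtain ⟨hX, hY, hZ⟩ := dist_circumcenter3_eq_circumradius3 h
  rw [orthocenter3_eq, orthocenter3_eq,
    circumcenter3_eq_of_mem_sphere (affineIndependent_rotate h) (S := ⟨_, _⟩) hY hZ hX]
  abel

theorem circumcenter3_orthocenter3_eq (h : AffineIndependent ℝ ![X, Y, Z])
    (h' : AffineIndependent ℝ ![orthocenter3 X Y Z h, X, Z]) :
    circumcenter3 (orthocenter3 X Y Z h) X Z h' = X + Z - circumcenter3 X Y Z h := by
  obtain ⟨hX, hY, hZ⟩ := dist_circumcenter3_eq_circumradius3 h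
  refine circumcenter3_eq_of_mem_sphere h'
    (S := ⟨X + Z - circumcenter3 X Y Z h, circumradius3 X Y Z h⟩) ?_ ?_ ?_
  · rw [mem_sphere, ← hY, orthocenter3_eq, dist_eq_norm, dist_eq_norm]
    congr 1
    module
  · rw [mem_sphere, ← hZ, dist_eq_norm, dist_eq_norm, ← norm_neg]
    congr 1
    module
  · rw [mem_sphere, ← hX, dist_eq_norm, dist_eq_norm, ← norm_neg]
    congr 1
    module

variable {A B C I : EuclideanSpace ℝ (Fin 2)} {a b c : ℝ}

theorem circumcenter3_eq_arcMidpoint (ha : dist B C = a) (hb : dist C A = b) (hc : dist A B = c)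
    (hT : a + b + c ≠ 0) (hU : b + c - a ≠ 0)
    (hI : I = (a + b + c)⁻¹ • (a • A + b • B + c • C)) (hBIC : AffineIndependent ℝ ![B, I, C]) :
    circumcenter3 B I C hBIC = arcMidpoint A B C a b c :=
  have hM := dist_arcMidpoint_eq_of_eq_incenter ha hb hc hT hU hI
  circumcenter3_eq_of_mem_sphere hBIC (S := ⟨_, _⟩) hM.1 hM.2 rfl

theorem circumcenter3_orthocenter3_mem_sphere_ofDiameter (hABC : AffineIndependent ℝ ![A, B, C])
    (ha : dist B C = a) (hb : dist C A = b) (hc : dist A B = c)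
    (hI : I = (a + b + c)⁻¹ • (a • A + b • B + c • C)) (hBIC : AffineIndependent ℝ ![B, I, C])
    (h' : AffineIndependent ℝ ![orthocenter3 B I C hBIC, B, C]) :
    circumcenter3 (orthocenter3 B I C hBIC) B C h' ∈
      Sphere.ofDiameter (orthocenter3 A B C hABC) (nagelPoint A B C a b c) := by
  have hbc : a < b + c := by
    simpa only [ha, hb, hc] using dist_lt_dist_add_dist_of_affineIndependent hABC
  have ha0 : 0 ≤ a := ha ▸ dist_nonneg
  have hT : a + b + c ≠ 0 := (by linarith : 0 < a + b + c).ne'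
  have hU : b + c - a ≠ 0 := (sub_pos.2 hbc).ne'
  obtain ⟨hA, hB, hC⟩ := dist_circumcenter3_eq_circumradius3 hABC
  rw [circumcenter3_orthocenter3_eq, circumcenter3_eq_arcMidpoint ha hb hc hT hU hI,
    orthocenter3_eq]
  exact fuhrmannVertex_mem_sphere_ofDiameter ha hb hc hbc (hA.trans hC.symm) (hB.trans hC.symm)

end Triangle

/-- The orthocenter `H` of `ABC` lies on the Fuhrmann circle. -/
theorem orthocenter_on_fuhrmann_circle
    (A B C I H HA HB HC Oa Ob Oc : EuclideanSpace ℝ (Fin 2))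
    (hABC : AffineIndependent ℝ ![A, B, C])
    (a b c s : ℝ)
    (ha : a = dist B C) (hb : b = dist C A) (hc : c = dist A B)
    (hs : s = (a + b + c) / 2)
    (hI : I = (2 * s)⁻¹ • (a • A + b • B + c • C))
    (hH : H = orthocenter3 A B C hABC)
    (hBIC : AffineIndependent ℝ ![B, I, C])
    (hCIA : AffineIndependent ℝ ![C, I, A])
    (hAIB : AffineIndependent ℝ ![A, I, B])
    (hHA : HA = orthocenter3 B I C hBIC)
    (hHB : HB = orthocenter3 C I A hCIA)
    (hHC : HC = orthocenter3 A I B hAIB)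
    (ha' : AffineIndependent ℝ ![HA, B, C])
    (hb' : AffineIndependent ℝ ![HB, C, A])
    (hc' : AffineIndependent ℝ ![HC, A, B])
    (hOa : Oa = circumcenter3 HA B C ha')
    (hOb : Ob = circumcenter3 HB C A hb')
    (hOc : Oc = circumcenter3 HC A B hc')
    (hF : AffineIndependent ℝ ![Oa, Ob, Oc]) :
    dist H (circumcenter3 Oa Ob Oc hF) = circumradius3 Oa Ob Oc hF := by
  subst hH hHA hHB hHC
  have hIA : I = (a + b + c)⁻¹ • (a • A + b • B + c • C) := by
    rw [hI, hs]; congr 1; ring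
  have hIB : I = (b + c + a)⁻¹ • (b • B + c • C + a • A) := by rw [hIA]; module
  have hIC : I = (c + a + b)⁻¹ • (c • C + a • A + b • B) := by rw [hIA]; module
  have hBCA := affineIndependent_rotate hABC
  set S := Sphere.ofDiameter (orthocenter3 A B C hABC) (nagelPoint A B C a b c) with hS
  have hOaS : Oa ∈ S := by
    rw [hOa, hS]
    exact circumcenter3_orthocenter3_mem_sphere_ofDiameter hABC ha.symm hb.symm hc.symm hIA hBIC ha'
  have hObS : Ob ∈ S := by
    rw [hOb, hS, ← orthocenter3_rotate hABC, ← nagelPoint_rotate]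
    exact circumcenter3_orthocenter3_mem_sphere_ofDiameter hBCA hb.symm hc.symm ha.symm hIB hCIA hb'
  have hOcS : Oc ∈ S := by
    rw [hOc, hS, ← orthocenter3_rotate hABC, ← orthocenter3_rotate hBCA, ← nagelPoint_rotate,
      ← nagelPoint_rotate]
    exact circumcenter3_orthocenter3_mem_sphere_ofDiameter (affineIndependent_rotate hBCA)
      hc.symm ha.symm hb.symm hIC hAIB hc'
  rw [circumcenter3_eq_of_mem_sphere hF hOaS hObS hOcS,
    circumradius3_eq_of_mem_sphere hF hOaS hObS hOcS]
  exact (Sphere.isDiameter_ofDiameter _ _).left_mem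
end
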